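/- Let P be a d×d real symmetric orthogonal projector (P = P², P = Pᵀ, P positive semidefinite) and let θ be a d×d symmetric positive definite matrix. Then P θ⁻¹ P ⪰ (P θ P)†, where ⪰ denotes the Loewner order and † the Moore–Penrose pseudoinverse. -/

import Mathlib

open Matrix

/-- The four Penrose conditions characterizing the Moore–Penrose pseudoinverse `B` of `A`. -/
def IsMoorePenrose {d : ℕ} (A B : Matrix (Fin d) (Fin d) ℝ) : Prop :=
  A * B * A = A ∧ B * A * B = B ∧ (A * B)ᵀ = A * B ∧ (B * A)ᵀ = B * A

/-!
With `A = P θ P` and `A†` its pseudoinverse, `A†` is symmetric and `A† P = P A† = A†`, so also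
`A† θ A† = A† A A† = A†`. Then `P θ⁻¹ P - A† = Eᵀ θ E` for `E = θ⁻¹ P - A†`, which is positive
semidefinite since `θ` is.
-/

/-- Completing the square against a positive definite `θ`: the left side equals
`(θ⁻¹ X - Y)ᴴ θ (θ⁻¹ X - Y)`. -/
theorem Matrix.PosDef.posSemidef_complete_square {m n K : Type*} [Fintype n] [DecidableEq n]
    [Finite m] [Field K] [PartialOrder K] [StarRing K] {θ : Matrix n n K} (hθ : θ.PosDef)
    (X Y : Matrix n m K) :
    (Xᴴ * θ⁻¹ * X - Xᴴ * Y - Yᴴ * X + Yᴴ * θ * Y).PosSemidef := by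
  have hdet : IsUnit θ.det := (isUnit_iff_isUnit_det θ).mp hθ.isUnit
  have hθinv : θ⁻¹ᴴ = θ⁻¹ := by rw [conjTranspose_nonsing_inv, hθ.isHermitian.eq]
  convert hθ.posSemidef.conjTranspose_mul_mul_same (θ⁻¹ * X - Y) using 1
  simp only [conjTranspose_sub, conjTranspose_mul, hθinv, Matrix.sub_mul, Matrix.mul_sub,
    Matrix.mul_assoc, mul_nonsing_inv_cancel_left θ _ hdet, nonsing_inv_mul_cancel_left θ _ hdet]
  abel

namespace IsMoorePenrose

variable {d : ℕ} {A B C Q : Matrix (Fin d) (Fin d) ℝ}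

theorem unique (hB : IsMoorePenrose A B) (hC : IsMoorePenrose A C) : B = C := by
  obtain ⟨hB1, hB2, hB3, hB4⟩ := hB
  obtain ⟨hC1, hC2, hC3, hC4⟩ := hC
  have hAB : A * B = A * C := by
    calc A * B = (A * C * A * B)ᵀ := by rw [hC1, hB3]
    _ = (A * B)ᵀ * (A * C)ᵀ := by rw [← transpose_mul]; noncomm_ring
    _ = A * B * A * C := by rw [hB3, hC3]; noncomm_ring
    _ = A * C := by rw [hB1]
  have hBA : B * A = C * A := by
    calc B * A = (B * (A * C * A))ᵀ := by rw [hC1, hB4]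
    _ = (C * A)ᵀ * (B * A)ᵀ := by rw [← transpose_mul]; noncomm_ring
    _ = C * (A * B * A) := by rw [hB4, hC4]; noncomm_ring
    _ = C * A := by rw [hB1]
  calc B = B * (A * B) := by rw [← Matrix.mul_assoc, hB2]
  _ = B * A * C := by rw [hAB, Matrix.mul_assoc]
  _ = C := by rw [hBA, hC2]

theorem transpose (h : IsMoorePenrose A B) : IsMoorePenrose Aᵀ Bᵀ := by
  obtain ⟨h1, h2, h3, h4⟩ := h
  refine ⟨?_, ?_, ?_, ?_⟩
  · rw [← transpose_mul, ← transpose_mul, ← Matrix.mul_assoc, h1]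
  · rw [← transpose_mul, ← transpose_mul, ← Matrix.mul_assoc, h2]
  · rw [← transpose_mul, transpose_transpose, h4]
  · rw [← transpose_mul, transpose_transpose, h3]

theorem transpose_eq_self (h : IsMoorePenrose A B) (hA : Aᵀ = A) : Bᵀ = B :=
  (hA ▸ h.transpose).unique h

theorem mul_transpose_eq (h : IsMoorePenrose A B) (hQ : Q * A = A) : B * Qᵀ = B := by
  obtain ⟨-, h2, h3, -⟩ := h
  have hABQ : A * B * Qᵀ = A * B := by
    rw [← h3, ← transpose_mul, ← Matrix.mul_assoc, hQ]
  rw [← h2, Matrix.mul_assoc B, Matrix.mul_assoc, hABQ, ← Matrix.mul_assoc]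

theorem transpose_mul_eq (h : IsMoorePenrose A B) (hQ : A * Q = A) : Qᵀ * B = B := by
  have hQA : Qᵀ * Aᵀ = Aᵀ := by rw [← transpose_mul, hQ]
  have hBQ := h.transpose.mul_transpose_eq hQA
  rw [transpose_transpose] at hBQ
  rw [← transpose_inj, transpose_mul, transpose_transpose, hBQ]

end IsMoorePenrose

theorem stmt0_general {d : ℕ} (P θ pinv : Matrix (Fin d) (Fin d) ℝ)
    (hPproj : P * P = P) (hPsym : Pᵀ = P)
    (hθ : θ.PosDef)
    (hpinv : IsMoorePenrose (P * θ * P) pinv) :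
    (P * θ⁻¹ * P - pinv).PosSemidef := by
  have hθsym : θᵀ = θ := hθ.isHermitian
  have hsym : pinvᵀ = pinv := hpinv.transpose_eq_self <| by
    rw [transpose_mul, transpose_mul, hPsym, hθsym, Matrix.mul_assoc]
  have hpinvP : pinv * P = pinv := by
    simpa only [hPsym] using
      hpinv.mul_transpose_eq (Q := P) (by simp only [← Matrix.mul_assoc, hPproj])
  have hPpinv : P * pinv = pinv := by
    simpa only [hPsym] using hpinv.transpose_mul_eq (Q := P) (by rw [Matrix.mul_assoc, hPproj])
  have hpinvθpinv : pinv * θ * pinv = pinv := by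
    calc pinv * θ * pinv = pinv * P * θ * (P * pinv) := by rw [hpinvP, hPpinv]
    _ = pinv := by simpa only [Matrix.mul_assoc] using hpinv.2.1
  have hsquare := hθ.posSemidef_complete_square P pinv
  simp only [conjTranspose_eq_transpose_of_trivial, hPsym, hsym, hPpinv, hpinvP,
    hpinvθpinv] at hsquare
  simpa only [sub_add_cancel] using hsquare

/-- If `P` is a symmetric positive semidefinite orthogonal projector and `θ` is symmetric
positive definite, then `P θ⁻¹ P ⪰ (P θ P)†` in the Loewner order. -/
theorem stmt0 {d : ℕ} (P θ pinv : Matrix (Fin d) (Fin d) ℝ)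
    (hPproj : P * P = P) (hPsym : Pᵀ = P) (hPpsd : P.PosSemidef)
    (hθ : θ.PosDef)
    (hpinv : IsMoorePenrose (P * θ * P) pinv) :
    (P * θ⁻¹ * P - pinv).PosSemidef :=
  stmt0_general P θ pinv hPproj hPsym hθ hpinv
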